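/- arXiv:math/0004173 — 2 statements merged into one kernel-verified Lean document; each statement's English description precedes it below -/
import Mathlib

section
/- For every integer r ≥ 0, every (r+2)-times differentiable function F : ℍ → ℂ, and every γ = (a b; c d) ∈ SL₂(ℝ), Bol's identity holds: d^{r+1}/dz^{r+1} [ (cz+d)^r · F(γz) ] = (cz+d)^{-r-2} · F^{(r+1)}(γz), where γz = (az+b)/(cz+d). -/
open Complex

namespace BolAux
noncomputable section

def U : Set ℂ := {z : ℂ | 0 < z.im}

lemma isOpen_U : IsOpen U := isOpen_lt continuous_const Complex.continuous_im

variable {a b c d : ℝ}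

lemma j_ne_zero (h1 : a * d - b * c = 1) {w : ℂ} (hw : w ∈ U) :
    (c : ℂ) * w + d ≠ 0 := by
  intro h0
  have hwim : 0 < w.im := hw
  have him : c * w.im = 0 := by
    have := congrArg Complex.im h0
    simpa using this
  have hc : c = 0 := by
    rcases mul_eq_zero.1 him with h | h
    · exact h
    · exact absurd h (ne_of_gt hwim)
  have hd : d = 0 := by
    have := congrArg Complex.re h0
    simpa [hc] using this
  rw [hc, hd] at h1; simp at h1

lemma mem_U (h1 : a * d - b * c = 1) {w : ℂ} (hw : w ∈ U) :
    ((a : ℂ) * w + b) / ((c : ℂ) * w + d) ∈ U := by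
  have hj := j_ne_zero h1 hw
  have hns : 0 < Complex.normSq ((c : ℂ) * w + d) := Complex.normSq_pos.2 hj
  have hwim : 0 < w.im := hw
  have key : (((a : ℂ) * w + b) / ((c : ℂ) * w + d)).im
      = w.im / Complex.normSq ((c : ℂ) * w + d) := by
    rw [Complex.div_im]
    simp only [Complex.add_im, Complex.add_re, Complex.mul_im, Complex.mul_re,
      Complex.ofReal_re, Complex.ofReal_im]
    rw [div_sub_div_same, div_eq_div_iff hns.ne' hns.ne']
    linear_combination Complex.normSq ((c:ℂ)*w+d) * w.im * h1
  simp only [U, Set.mem_setOf_eq] at *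
  rw [key]
  positivity

lemma deriv_m (h1 : a * d - b * c = 1) {w : ℂ} (hw : w ∈ U) :
    HasDerivAt (fun w : ℂ => ((a : ℂ) * w + b) / ((c : ℂ) * w + d))
      (((c : ℂ) * w + d) ^ (-2 : ℤ)) w := by
  have hj := j_ne_zero h1 hw
  have h1' : (a : ℂ) * d - b * c = 1 := by exact_mod_cast h1
  have hnum : HasDerivAt (fun w : ℂ => (a : ℂ) * w + b) (a : ℂ) w := by
    simpa using ((hasDerivAt_id w).const_mul (a : ℂ)).add_const (b : ℂ)
  have hden : HasDerivAt (fun w : ℂ => (c : ℂ) * w + d) (c : ℂ) w := by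
    simpa using ((hasDerivAt_id w).const_mul (c : ℂ)).add_const (d : ℂ)
  have h := hnum.div hden hj
  have hnum2 : (a : ℂ) * ((c : ℂ) * w + d) - ((a : ℂ) * w + b) * c = 1 := by
    linear_combination h1'
  rw [hnum2] at h
  have e : ((c : ℂ) * w + d) ^ (-2 : ℤ) = 1 / ((c : ℂ) * w + d) ^ 2 := by
    rw [zpow_neg, one_div]
    norm_cast
  rw [e]
  exact h

lemma diffOn_iteratedDeriv (k : ℕ) (g : ℂ → ℂ) (hg : ContDiffOn ℂ (k + 1 : ℕ) g U) :
    DifferentiableOn ℂ (iteratedDeriv k g) U := by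
  induction k generalizing g with
  | zero => simpa [iteratedDeriv_zero] using hg.differentiableOn (by norm_num)
  | succ k IH =>
    rw [iteratedDeriv_succ']
    exact IH (deriv g) (hg.deriv_of_isOpen isOpen_U (by norm_cast))

lemma diffAt_iteratedDeriv {k : ℕ} {g : ℂ → ℂ} (hg : ContDiffOn ℂ (k + 1 : ℕ) g U)
    {z : ℂ} (hz : z ∈ U) : DifferentiableAt ℂ (iteratedDeriv k g) z :=
  (diffOn_iteratedDeriv k g hg z hz).differentiableAt (isOpen_U.mem_nhds hz)

lemma leibniz (c d : ℂ) (g : ℂ → ℂ) (n : ℕ) (hg : ContDiffOn ℂ (n + 1 : ℕ) g U) :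
    ∀ z ∈ U, iteratedDeriv (n + 1) (fun w => (c * w + d) * g w) z
      = (c * z + d) * iteratedDeriv (n + 1) g z + (n + 1 : ℂ) * c * iteratedDeriv n g z := by
  induction n with
  | zero =>
    intro z hz
    have hgz : DifferentiableAt ℂ g z :=
      (hg.differentiableOn (by norm_num) z hz).differentiableAt (isOpen_U.mem_nhds hz)
    have hja : HasDerivAt (fun w : ℂ => c * w + d) c z := by
      simpa using ((hasDerivAt_id z).const_mul c).add_const d
    have h := hja.mul hgz.hasDerivAt
    simp only [Pi.mul_def] at h
    rw [iteratedDeriv_one, iteratedDeriv_one, iteratedDeriv_zero, h.deriv]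
    ring
  | succ n IH =>
    intro z hz
    have hg' : ContDiffOn ℂ (n + 1 : ℕ) g U := hg.of_le (by norm_cast; omega)
    have hEq : iteratedDeriv (n + 1) (fun w => (c * w + d) * g w) =ᶠ[nhds z]
        fun w => (c * w + d) * iteratedDeriv (n + 1) g w
          + (n + 1 : ℂ) * c * iteratedDeriv n g w := by
      filter_upwards [isOpen_U.mem_nhds hz] with w hw using IH hg' w hw
    rw [iteratedDeriv_succ, hEq.deriv_eq]
    have hd1 : DifferentiableAt ℂ (iteratedDeriv (n + 1) g) z :=
      diffAt_iteratedDeriv hg hz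
    have hd0 : DifferentiableAt ℂ (iteratedDeriv n g) z :=
      diffAt_iteratedDeriv hg' hz
    have hja : HasDerivAt (fun w : ℂ => c * w + d) c z := by
      simpa using ((hasDerivAt_id z).const_mul c).add_const d
    have h1 := hja.mul hd1.hasDerivAt
    have h2 := hd0.hasDerivAt.const_mul ((n + 1 : ℂ) * c)
    have h := h1.add h2
    simp only [Pi.mul_def, Pi.add_def] at h
    rw [h.deriv, ← iteratedDeriv_succ, ← iteratedDeriv_succ]
    push_cast
    ring

lemma contDiffOn_g (h1 : a * d - b * c = 1) (r : ℕ) (n : WithTop ℕ∞) {F : ℂ → ℂ}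
    (hF : ContDiffOn ℂ n F U) :
    ContDiffOn ℂ n
      (fun w => ((c : ℂ) * w + d) ^ r * F (((a : ℂ) * w + b) / ((c : ℂ) * w + d))) U := by
  have hm : ContDiffOn ℂ n (fun w : ℂ => ((a : ℂ) * w + b) / ((c : ℂ) * w + d)) U := by
    apply ContDiffOn.div
    · exact ((contDiff_const.mul contDiff_id).add contDiff_const).contDiffOn
    · exact ((contDiff_const.mul contDiff_id).add contDiff_const).contDiffOn
    · exact fun w hw => j_ne_zero h1 hw
  have hcomp : ContDiffOn ℂ n (fun w => F (((a : ℂ) * w + b) / ((c : ℂ) * w + d))) U :=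
    hF.comp hm fun w hw => mem_U h1 hw
  exact (((contDiff_const.mul contDiff_id).add contDiff_const).pow r).contDiffOn.mul hcomp

lemma bol_main (r : ℕ) {a b c d : ℝ} (h1 : a * d - b * c = 1) (F : ℂ → ℂ)
    (hF : ContDiffOn ℂ (r + 2 : ℕ) F U) :
    ∀ z ∈ U, iteratedDeriv (r + 1)
        (fun w => ((c : ℂ) * w + d) ^ r * F (((a : ℂ) * w + b) / ((c : ℂ) * w + d))) z
      = ((c : ℂ) * z + d) ^ (-(r : ℤ) - 2) *
          iteratedDeriv (r + 1) F (((a : ℂ) * z + b) / ((c : ℂ) * z + d)) := by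
  induction r generalizing F with
  | zero =>
    intro z hz
    have hj := j_ne_zero h1 hz
    have hmz := mem_U h1 hz
    have hfun : (fun w : ℂ => ((c : ℂ) * w + d) ^ (0 : ℕ) *
        F (((a : ℂ) * w + b) / ((c : ℂ) * w + d)))
        = fun w => F (((a : ℂ) * w + b) / ((c : ℂ) * w + d)) := by
      funext w; rw [pow_zero, one_mul]
    rw [hfun, iteratedDeriv_one, iteratedDeriv_one]
    have hFd : DifferentiableAt ℂ F (((a : ℂ) * z + b) / ((c : ℂ) * z + d)) :=
      (hF.differentiableOn (by norm_num) _ hmz).differentiableAt (isOpen_U.mem_nhds hmz)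
    have h : HasDerivAt (fun w : ℂ => F (((a : ℂ) * w + b) / ((c : ℂ) * w + d)))
        (deriv F (((a : ℂ) * z + b) / ((c : ℂ) * z + d)) * ((c : ℂ) * z + d) ^ (-2 : ℤ)) z :=
      HasDerivAt.comp z hFd.hasDerivAt (deriv_m h1 hz)
    rw [h.deriv]
    rw [show (-((0 : ℕ) : ℤ) - 2) = (-2 : ℤ) by norm_num]
    ring
  | succ r IH =>
    intro z hz
    have hF' : ContDiffOn ℂ (r + 2 : ℕ) F U := hF.of_le (by norm_cast; omega)
    have hj := j_ne_zero h1 hz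
    have hmz := mem_U h1 hz
    have hg : ContDiffOn ℂ ((r + 1) + 1 : ℕ)
        (fun w => ((c : ℂ) * w + d) ^ r * F (((a : ℂ) * w + b) / ((c : ℂ) * w + d))) U :=
      contDiffOn_g h1 r _ (hF.of_le (by norm_cast; omega))
    have hfun : (fun w : ℂ => ((c : ℂ) * w + d) ^ (r + 1) *
        F (((a : ℂ) * w + b) / ((c : ℂ) * w + d)))
        = fun w => ((c : ℂ) * w + d) *
            (((c : ℂ) * w + d) ^ r * F (((a : ℂ) * w + b) / ((c : ℂ) * w + d))) := by
      funext w; ring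
    rw [hfun, leibniz (c : ℂ) (d : ℂ) _ (r + 1) hg z hz]
    have IHz := IH F hF'
    rw [IHz z hz]
    have hEq : iteratedDeriv (r + 1)
        (fun w => ((c : ℂ) * w + d) ^ r * F (((a : ℂ) * w + b) / ((c : ℂ) * w + d)))
        =ᶠ[nhds z] fun w => ((c : ℂ) * w + d) ^ (-(r : ℤ) - 2) *
          iteratedDeriv (r + 1) F (((a : ℂ) * w + b) / ((c : ℂ) * w + d)) := by
      filter_upwards [isOpen_U.mem_nhds hz] with w hw using IHz w hw
    rw [iteratedDeriv_succ, hEq.deriv_eq]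
    have hja : HasDerivAt (fun w : ℂ => (c : ℂ) * w + d) (c : ℂ) z := by
      simpa using ((hasDerivAt_id z).const_mul (c : ℂ)).add_const (d : ℂ)
    have hA : HasDerivAt (fun w : ℂ => ((c : ℂ) * w + d) ^ (-(r : ℤ) - 2))
        ((((-(r : ℤ) - 2) : ℤ) : ℂ) * ((c : ℂ) * z + d) ^ (-(r : ℤ) - 3) * c) z := by
      have h0 := hasDerivAt_zpow (-(r : ℤ) - 2) ((c : ℂ) * z + d) (Or.inl hj)
      have h2 := h0.comp z hja
      rw [show (-(r : ℤ) - 2 - 1) = -(r : ℤ) - 3 by ring] at h2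
      exact h2
    have hB : HasDerivAt
        (fun w : ℂ => iteratedDeriv (r + 1) F (((a : ℂ) * w + b) / ((c : ℂ) * w + d)))
        (iteratedDeriv (r + 2) F (((a : ℂ) * z + b) / ((c : ℂ) * z + d)) *
          ((c : ℂ) * z + d) ^ (-2 : ℤ)) z := by
      have hd : DifferentiableAt ℂ (iteratedDeriv (r + 1) F)
          (((a : ℂ) * z + b) / ((c : ℂ) * z + d)) :=
        diffAt_iteratedDeriv (hF.of_le (by norm_cast; omega)) hmz
      have h2 := HasDerivAt.comp z hd.hasDerivAt (deriv_m h1 hz)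
      rw [show deriv (iteratedDeriv (r + 1) F) = iteratedDeriv (r + 2) F from
        (iteratedDeriv_succ).symm] at h2
      exact h2
    have h := hA.mul hB
    simp only [Pi.mul_def] at h
    rw [h.deriv]
    simp only [show r + 1 + 1 = r + 2 from rfl]
    set X := (c : ℂ) * z + d with hX
    set P := iteratedDeriv (r + 1) F (((a : ℂ) * z + b) / ((c : ℂ) * z + d)) with hP
    set Q := iteratedDeriv (r + 2) F (((a : ℂ) * z + b) / ((c : ℂ) * z + d)) with hQ
    set C := (c : ℂ) with hC
    clear_value X P Q
    rw [show (-((r + 1 : ℕ) : ℤ) - 2) = -(r : ℤ) - 3 by push_cast; ring]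
    have hz1 : X ^ (-(r : ℤ) - 2) = X ^ (-(r : ℤ) - 3) * X := by
      rw [show -(r : ℤ) - 2 = (-(r : ℤ) - 3) + 1 by ring, zpow_add_one₀ hj]
    have hz2 : X ^ (-(r : ℤ) - 3) = X * (X ^ (-(r : ℤ) - 2) * X ^ (-2 : ℤ)) := by
      rw [show -(r : ℤ) - 3 = 1 + ((-(r : ℤ) - 2) + (-2)) by ring, zpow_add₀ hj,
        zpow_add₀ hj, zpow_one]
    push_cast
    linear_combination ((r : ℂ) + 2) * C * P * hz1 - Q * hz2

end
end BolAux

/-- **Bol's identity.** For `r ≥ 0` and `F` an `(r+2)`-times differentiable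
(holomorphic) function on the upper half-plane, and `γ = (a b; c d) ∈ SL₂(ℝ)`,
the `(r+1)`-st derivative of `(cz+d)^r · F(γz)` equals `(cz+d)^{-r-2} · F^{(r+1)}(γz)`. -/
theorem bol_identity (r : ℕ) (F : ℂ → ℂ)
    (hF : ContDiffOn ℂ (r + 2 : ℕ) F {z : ℂ | 0 < z.im})
    (γ : Matrix.SpecialLinearGroup (Fin 2) ℝ) (z : ℂ) (hz : 0 < z.im) :
    iteratedDeriv (r + 1)
      (fun w : ℂ => ((γ.1 1 0 : ℂ) * w + (γ.1 1 1 : ℂ)) ^ r *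
        F (((γ.1 0 0 : ℂ) * w + (γ.1 0 1 : ℂ)) /
           ((γ.1 1 0 : ℂ) * w + (γ.1 1 1 : ℂ)))) z
      = ((γ.1 1 0 : ℂ) * z + (γ.1 1 1 : ℂ)) ^ (-(r : ℤ) - 2) *
        iteratedDeriv (r + 1) F
          (((γ.1 0 0 : ℂ) * z + (γ.1 0 1 : ℂ)) /
           ((γ.1 1 0 : ℂ) * z + (γ.1 1 1 : ℂ))) := by
  have h1 : γ.1 0 0 * γ.1 1 1 - γ.1 0 1 * γ.1 1 0 = 1 := by
    have h := γ.2
    rwa [Matrix.det_fin_two] at h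
  exact BolAux.bol_main r h1 F hF z hz
end

section
/- Let f be a holomorphic automorphic form of weight r+2 and multiplier ψ on a discrete subgroup Γ of SL₂(ℝ), i.e. f(γz) = ψ(γ)(cz+d)^{r+2} f(z) for all γ ∈ Γ. If F : ℍ → ℂ is holomorphic with F^{(r+1)} = f, then for each γ = (a b; c d) ∈ Γ the function z ↦ (cz+d)^r ψ(γ)^{-1} F(γz) − F(z) is a polynomial in z of degree at most r. -/
open Complex

/-- The Möbius action of `SL₂(ℝ)` on the upper half-plane: `γz = (az+b)/(cz+d)`. -/
noncomputable def moebR (γ : Matrix.SpecialLinearGroup (Fin 2) ℝ) (z : ℂ) : ℂ :=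
  ((γ.1 0 0 : ℂ) * z + (γ.1 0 1 : ℂ)) / ((γ.1 1 0 : ℂ) * z + (γ.1 1 1 : ℂ))

/-- The automorphy factor `j(γ,z) = cz + d`. -/
noncomputable def jfac (γ : Matrix.SpecialLinearGroup (Fin 2) ℝ) (z : ℂ) : ℂ :=
  (γ.1 1 0 : ℂ) * z + (γ.1 1 1 : ℂ)

namespace Eichler

def UH : Set ℂ := {z : ℂ | 0 < z.im}

lemma UH_open : IsOpen UH := isOpen_lt continuous_const Complex.continuous_im

lemma UH_convex : Convex ℝ UH := convex_halfSpace_im_gt 0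

lemma I_mem_UH : Complex.I ∈ UH := by simp [UH]

variable (g : Matrix.SpecialLinearGroup (Fin 2) ℝ)

lemma detR : (g.1 0 0 : ℝ) * g.1 1 1 - g.1 0 1 * g.1 1 0 = 1 := by
  have h := g.2
  rw [Matrix.det_fin_two] at h
  exact h

lemma detC : (g.1 0 0 : ℂ) * (g.1 1 1 : ℂ) - (g.1 0 1 : ℂ) * (g.1 1 0 : ℂ) = 1 := by
  exact_mod_cast congrArg (fun x : ℝ => (x : ℂ)) (detR g)

lemma jfac_ne {z : ℂ} (hz : z ∈ UH) : jfac g z ≠ 0 := by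
  intro h
  have him : (g.1 1 0 : ℝ) * z.im = 0 := by
    have := congrArg Complex.im h
    simpa [jfac, Complex.add_im, Complex.mul_im] using this
  have hc : (g.1 1 0 : ℝ) = 0 := by
    rcases mul_eq_zero.1 him with h' | h'
    · exact h'
    · exact absurd h' (ne_of_gt hz)
  have hd : (g.1 1 1 : ℝ) = 0 := by
    have := congrArg Complex.re h
    simpa [jfac, Complex.add_re, Complex.mul_re, hc] using this
  have := detR g
  rw [hc, hd] at this
  norm_num at this

lemma moebR_mem {z : ℂ} (hz : z ∈ UH) : moebR g z ∈ UH := by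
  have hne := jfac_ne g hz
  have hns : 0 < Complex.normSq ((g.1 1 0 : ℂ) * z + (g.1 1 1 : ℂ)) :=
    Complex.normSq_pos.2 hne
  show 0 < (moebR g z).im
  unfold moebR
  rw [Complex.div_im]
  have h1 : ((g.1 0 0 : ℂ) * z + (g.1 0 1 : ℂ)).im = g.1 0 0 * z.im := by
    simp [Complex.add_im, Complex.mul_im]
  have h2 : ((g.1 0 0 : ℂ) * z + (g.1 0 1 : ℂ)).re = g.1 0 0 * z.re + g.1 0 1 := by
    simp [Complex.add_re, Complex.mul_re]
  have h3 : ((g.1 1 0 : ℂ) * z + (g.1 1 1 : ℂ)).im = g.1 1 0 * z.im := by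
    simp [Complex.add_im, Complex.mul_im]
  have h4 : ((g.1 1 0 : ℂ) * z + (g.1 1 1 : ℂ)).re = g.1 1 0 * z.re + g.1 1 1 := by
    simp [Complex.add_re, Complex.mul_re]
  rw [h1, h2, h3, h4, div_sub_div_same]
  have key : g.1 0 0 * z.im * (g.1 1 0 * z.re + g.1 1 1)
      - (g.1 0 0 * z.re + g.1 0 1) * (g.1 1 0 * z.im) = z.im := by
    have h := detR g; linear_combination z.im * h
  rw [key]
  exact div_pos hz hns

lemma hasDerivAt_jfac (z : ℂ) : HasDerivAt (jfac g) (g.1 1 0 : ℂ) z := by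
  have := ((hasDerivAt_id z).const_mul ((g.1 1 0 : ℂ))).add_const ((g.1 1 1 : ℂ))
  show HasDerivAt (fun w => (g.1 1 0 : ℂ) * w + (g.1 1 1 : ℂ)) _ z
  simpa using this

lemma hasDerivAt_jpow (m : ℕ) (z : ℂ) :
    HasDerivAt (fun w => jfac g w ^ m) ((m : ℂ) * jfac g z ^ (m - 1) * g.1 1 0) z :=
  (hasDerivAt_jfac g z).pow m

lemma hasDerivAt_jpow_inv (m : ℕ) {z : ℂ} (hz : z ∈ UH) :
    HasDerivAt (fun w => (jfac g w ^ m)⁻¹)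
      (-((m : ℂ) * jfac g z ^ (m - 1) * g.1 1 0) / (jfac g z ^ m) ^ 2) z :=
  (hasDerivAt_jpow g m z).inv (pow_ne_zero _ (jfac_ne g hz))

lemma hasDerivAt_moebR {z : ℂ} (hz : z ∈ UH) :
    HasDerivAt (moebR g) ((jfac g z ^ 2)⁻¹) z := by
  have hne : ((g.1 1 0 : ℂ) * z + (g.1 1 1 : ℂ)) ≠ 0 := jfac_ne g hz
  have h1 : HasDerivAt (fun w : ℂ => (g.1 0 0 : ℂ) * w + (g.1 0 1 : ℂ)) (g.1 0 0 : ℂ) z := by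
    simpa using ((hasDerivAt_id z).const_mul ((g.1 0 0 : ℂ))).add_const ((g.1 0 1 : ℂ))
  have h2 : HasDerivAt (fun w : ℂ => (g.1 1 0 : ℂ) * w + (g.1 1 1 : ℂ)) (g.1 1 0 : ℂ) z := by
    simpa using ((hasDerivAt_id z).const_mul ((g.1 1 0 : ℂ))).add_const ((g.1 1 1 : ℂ))
  have := h1.div h2 hne
  refine HasDerivAt.congr_deriv (this : HasDerivAt (moebR g) _ z) ?_
  have hnum : (g.1 0 0 : ℂ) * ((g.1 1 0 : ℂ) * z + (g.1 1 1 : ℂ))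
      - ((g.1 0 0 : ℂ) * z + (g.1 0 1 : ℂ)) * (g.1 1 0 : ℂ) = 1 := by
    linear_combination detC g
  rw [hnum, jfac]
  rw [inv_eq_one_div]


variable {g : Matrix.SpecialLinearGroup (Fin 2) ℝ}

lemma an_iter {v : ℂ → ℂ} (hv : AnalyticOnNhd ℂ v UH) (k : ℕ) :
    AnalyticOnNhd ℂ (iteratedDeriv k v) UH := by
  rw [iteratedDeriv_eq_iterate]
  exact hv.iterated_deriv k

lemma hasDerivAt_iter {v : ℂ → ℂ} (hv : AnalyticOnNhd ℂ v UH) (k : ℕ) {z : ℂ} (hz : z ∈ UH) :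
    HasDerivAt (iteratedDeriv k v) (iteratedDeriv (k + 1) v z) z := by
  rw [iteratedDeriv_succ]
  exact ((an_iter hv k) z hz).differentiableAt.hasDerivAt

lemma hasDerivAt_comp_moeb {v : ℂ → ℂ} (hv : AnalyticOnNhd ℂ v UH) (k : ℕ) {z : ℂ}
    (hz : z ∈ UH) :
    HasDerivAt (fun w => iteratedDeriv k v (moebR g w))
      (iteratedDeriv (k + 1) v (moebR g z) * (jfac g z ^ 2)⁻¹) z := by
  have := (hasDerivAt_iter hv k (moebR_mem g hz)).comp z (hasDerivAt_moebR g hz)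
  exact this

lemma leib {v : ℂ → ℂ} (hv : AnalyticOnNhd ℂ v UH) (m : ℕ) :
    ∀ z ∈ UH, iteratedDeriv (m + 1) (fun w => jfac g w * v w) z
      = jfac g z * iteratedDeriv (m + 1) v z
        + ((m : ℂ) + 1) * (g.1 1 0 : ℂ) * iteratedDeriv m v z := by
  induction m with
  | zero =>
    intro z hz
    have h : HasDerivAt (fun w => jfac g w * v w) _ z :=
      (hasDerivAt_jfac g z).mul (hv z hz).differentiableAt.hasDerivAt
    rw [iteratedDeriv_one, iteratedDeriv_one, iteratedDeriv_zero, h.deriv]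
    ring
  | succ m IH =>
    intro z hz
    rw [iteratedDeriv_succ]
    have hev : iteratedDeriv (m + 1) (fun w => jfac g w * v w) =ᶠ[nhds z]
        fun w => jfac g w * iteratedDeriv (m + 1) v w
          + ((m : ℂ) + 1) * (g.1 1 0 : ℂ) * iteratedDeriv m v w :=
      Filter.eventually_of_mem (UH_open.mem_nhds hz) (fun w hw => IH w hw)
    rw [hev.deriv_eq]
    have h1 : HasDerivAt (fun w => jfac g w * iteratedDeriv (m + 1) v w)
        ((g.1 1 0 : ℂ) * iteratedDeriv (m + 1) v z
          + jfac g z * iteratedDeriv (m + 2) v z) z :=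
      (hasDerivAt_jfac g z).mul (hasDerivAt_iter hv (m + 1) hz)
    have h2 : HasDerivAt (fun w => ((m : ℂ) + 1) * (g.1 1 0 : ℂ) * iteratedDeriv m v w)
        (((m : ℂ) + 1) * (g.1 1 0 : ℂ) * iteratedDeriv (m + 1) v z) z :=
      (hasDerivAt_iter hv m hz).const_mul _
    have h3 : HasDerivAt (fun w => jfac g w * iteratedDeriv (m + 1) v w
      + ((m : ℂ) + 1) * (g.1 1 0 : ℂ) * iteratedDeriv m v w) _ z := HasDerivAt.add h1 h2
    rw [h3.deriv]
    push_cast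
    ring

lemma an_jh {h : ℂ → ℂ} (hh : AnalyticOnNhd ℂ h UH) (n : ℕ) :
    AnalyticOnNhd ℂ (fun w => jfac g w ^ n * h (moebR g w)) UH := by
  apply DifferentiableOn.analyticOnNhd _ UH_open
  intro z hz
  have h1 : DifferentiableAt ℂ (fun w => jfac g w ^ n) z :=
    (hasDerivAt_jpow g n z).differentiableAt
  have h2 : DifferentiableAt ℂ (fun w => h (moebR g w)) z := by
    have := hasDerivAt_comp_moeb (g := g) (v := h) hh 0 hz
    simpa [iteratedDeriv_zero] using this.differentiableAt
  exact (h1.mul h2).differentiableWithinAt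

lemma bol (n : ℕ) : ∀ h : ℂ → ℂ, AnalyticOnNhd ℂ h UH → ∀ z ∈ UH,
    iteratedDeriv (n + 1) (fun w => jfac g w ^ n * h (moebR g w)) z
      = (jfac g z ^ (n + 2))⁻¹ * iteratedDeriv (n + 1) h (moebR g z) := by
  induction n with
  | zero =>
    intro h hh z hz
    have he : (fun w => jfac g w ^ 0 * h (moebR g w)) = fun w => h (moebR g w) := by
      funext w; simp
    rw [he, iteratedDeriv_one]
    have hc := hasDerivAt_comp_moeb (g := g) (v := h) hh 0 hz
    rw [iteratedDeriv_zero] at hc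
    rw [hc.deriv, iteratedDeriv_one]
    ring
  | succ n IH =>
    intro h hh z hz
    set c : ℂ := (g.1 1 0 : ℂ) with hc
    set u : ℂ → ℂ := fun w => jfac g w ^ n * h (moebR g w) with hu
    have hu_an : AnalyticOnNhd ℂ u UH := an_jh hh n
    have key := IH h hh
    have he : (fun w => jfac g w ^ (n + 1) * h (moebR g w)) = fun w => jfac g w * u w := by
      funext w; rw [hu]; ring
    rw [he]
    rw [leib hu_an (n + 1) z hz]
    -- compute iteratedDeriv (n+2) u z
    have hev : iteratedDeriv (n + 1) u =ᶠ[nhds z]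
        fun w => (jfac g w ^ (n + 2))⁻¹ * iteratedDeriv (n + 1) h (moebR g w) :=
      Filter.eventually_of_mem (UH_open.mem_nhds hz) (fun w hw => key w hw)
    have hd : HasDerivAt
        (fun w => (jfac g w ^ (n + 2))⁻¹ * iteratedDeriv (n + 1) h (moebR g w))
        (-(((n : ℂ) + 2) * jfac g z ^ (n + 1) * c) / (jfac g z ^ (n + 2)) ^ 2
            * iteratedDeriv (n + 1) h (moebR g z)
          + (jfac g z ^ (n + 2))⁻¹
            * (iteratedDeriv (n + 2) h (moebR g z) * (jfac g z ^ 2)⁻¹)) z := by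
    
      have hA := hasDerivAt_jpow_inv g (n + 2) hz
      have hB := hasDerivAt_comp_moeb (g := g) (v := h) hh (n + 1) hz
      have := hA.mul hB
      refine HasDerivAt.congr_deriv (this : HasDerivAt
        (fun w => (jfac g w ^ (n + 2))⁻¹ * iteratedDeriv (n + 1) h (moebR g w)) _ z) ?_
      push_cast
      have hne := jfac_ne g hz
      field_simp
      ring
    have h2 : iteratedDeriv (n + 2) u z
        = -(((n : ℂ) + 2) * jfac g z ^ (n + 1) * c) / (jfac g z ^ (n + 2)) ^ 2
            * iteratedDeriv (n + 1) h (moebR g z)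
          + (jfac g z ^ (n + 2))⁻¹
            * (iteratedDeriv (n + 2) h (moebR g z) * (jfac g z ^ 2)⁻¹) := by
      rw [iteratedDeriv_succ, hev.deriv_eq, hd.deriv]
    rw [h2, key z hz]
    have hne := jfac_ne g hz
    field_simp
    simp only [hc]
    push_cast
    ring


lemma iter_lin (c₀ : ℂ) {v w : ℂ → ℂ} (hv : AnalyticOnNhd ℂ v UH)
    (hw : AnalyticOnNhd ℂ w UH) (k : ℕ) :
    ∀ z ∈ UH, iteratedDeriv k (fun x => c₀ * v x - w x) z
      = c₀ * iteratedDeriv k v z - iteratedDeriv k w z := by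
  induction k with
  | zero => intro z hz; simp
  | succ k IH =>
    intro z hz
    rw [iteratedDeriv_succ]
    have hev : iteratedDeriv k (fun x => c₀ * v x - w x) =ᶠ[nhds z]
        fun x => c₀ * iteratedDeriv k v x - iteratedDeriv k w x :=
      Filter.eventually_of_mem (UH_open.mem_nhds hz) (fun x hx => IH x hx)
    rw [hev.deriv_eq]
    have hd : HasDerivAt (fun x => c₀ * iteratedDeriv k v x - iteratedDeriv k w x)
        (c₀ * iteratedDeriv (k + 1) v z - iteratedDeriv (k + 1) w z) z :=
      ((hasDerivAt_iter hv k hz).const_mul c₀).sub (hasDerivAt_iter hw k hz)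
    rw [hd.deriv]

lemma const_on_UH {v : ℂ → ℂ} (hd : ∀ z ∈ UH, HasDerivAt v 0 z) :
    ∀ z ∈ UH, v z = v Complex.I := by
  intro z hz
  have hdiff : DifferentiableOn ℂ v UH := fun x hx =>
    (hd x hx).differentiableAt.differentiableWithinAt
  refine Convex.is_const_of_fderivWithin_eq_zero UH_convex hdiff (fun x hx => ?_) hz I_mem_UH
  rw [fderivWithin_of_isOpen UH_open hx]
  apply ContinuousLinearMap.ext_ring
  rw [fderiv_apply_one_eq_deriv, (hd x hx).deriv]
  simp

lemma poly_of_iter_zero : ∀ (n : ℕ) (v : ℂ → ℂ), AnalyticOnNhd ℂ v UH →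
    (∀ z ∈ UH, iteratedDeriv (n + 1) v z = 0) →
    ∃ p : Polynomial ℂ, p.degree ≤ n ∧ ∀ z ∈ UH, v z = p.eval z := by
  intro n
  induction n with
  | zero =>
    intro v hv hz
    refine ⟨Polynomial.C (v Complex.I), le_trans Polynomial.degree_C_le (by simp), ?_⟩
    intro z hzUH
    have hd : ∀ x ∈ UH, HasDerivAt v 0 x := by
      intro x hx
      have := (hv x hx).differentiableAt.hasDerivAt
      rwa [show deriv v x = 0 from by
        have h0 := hz x hx
        rwa [iteratedDeriv_one] at h0] at this
    simpa using const_on_UH hd z hzUH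
  | succ n IH =>
    intro v hv hzero
    have hdv : AnalyticOnNhd ℂ (deriv v) UH := hv.deriv
    have hdz : ∀ z ∈ UH, iteratedDeriv (n + 1) (deriv v) z = 0 := by
      intro z hz
      have := hzero z hz
      rwa [iteratedDeriv_succ'] at this
    obtain ⟨q, hqdeg, hq⟩ := IH (deriv v) hdv hdz
    -- formal antiderivative of q
    set P : Polynomial ℂ := ∑ i ∈ Finset.range (q.natDegree + 1),
      Polynomial.C (q.coeff i * ((i : ℂ) + 1)⁻¹) * Polynomial.X ^ (i + 1) with hP
    have hPderiv : P.derivative = q := by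
      rw [hP, Polynomial.derivative_sum]
      have : ∀ i ∈ Finset.range (q.natDegree + 1),
          Polynomial.derivative (Polynomial.C (q.coeff i * ((i : ℂ) + 1)⁻¹)
            * Polynomial.X ^ (i + 1)) = Polynomial.C (q.coeff i) * Polynomial.X ^ i := by
        intro i _
        rw [Polynomial.derivative_C_mul_X_pow, Nat.add_sub_cancel]
        congr 1
        have hne : ((i : ℂ) + 1) ≠ 0 := Nat.cast_add_one_ne_zero i
        push_cast
        rw [mul_assoc, inv_mul_cancel₀ hne, mul_one]
      rw [Finset.sum_congr rfl this]
      simp only [Polynomial.C_mul_X_pow_eq_monomial]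
      exact (q.as_sum_range' (q.natDegree + 1) (lt_add_one _)).symm
    have hPdeg : P.degree ≤ (n + 1 : ℕ) := by
      rw [hP]
      refine le_trans (Polynomial.degree_sum_le _ _) ?_
      apply Finset.sup_le
      intro i hi
      refine le_trans (Polynomial.degree_C_mul_X_pow_le _ _) ?_
      have hi' : i ≤ n := by
        have h1 : i ≤ q.natDegree := Nat.lt_succ_iff.mp (Finset.mem_range.mp hi)
        have h2 : q.natDegree ≤ n := Polynomial.natDegree_le_iff_degree_le.mpr hqdeg
        exact le_trans h1 h2
      exact_mod_cast Nat.cast_le.mpr (Nat.succ_le_succ hi')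
    -- v - P.eval is constant on UH
    have hd : ∀ x ∈ UH, HasDerivAt (fun z => v z - P.eval z) 0 x := by
      intro x hx
      have h1 : HasDerivAt v (q.eval x) x := by
        have := (hv x hx).differentiableAt.hasDerivAt
        rwa [hq x hx] at this
      have h2 : HasDerivAt (fun z => P.eval z) (q.eval x) x := by
        have := P.hasDerivAt x
        rwa [hPderiv] at this
      have h3 : HasDerivAt (fun z => v z - P.eval z) _ x := h1.sub h2
      simpa using h3
    refine ⟨P + Polynomial.C (v Complex.I - P.eval Complex.I), ?_, ?_⟩
    · refine le_trans (Polynomial.degree_add_le _ _) (max_le hPdeg ?_)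
      exact le_trans Polynomial.degree_C_le (by exact_mod_cast Nat.cast_le.mpr (Nat.zero_le _))
    · intro z hz
      have := const_on_UH hd z hz
      simp only [Polynomial.eval_add, Polynomial.eval_C]
      linear_combination this



end Eichler

/-- If `f` is a holomorphic automorphic form of weight `r+2` with multiplier `ψ`
on a discrete subgroup `Γ ⊂ SL₂(ℝ)`, and `F` is holomorphic on ℍ with
`F^{(r+1)} = f`, then for each `γ ∈ Γ` the function
`z ↦ (cz+d)^r ψ(γ)⁻¹ F(γz) − F(z)` is a polynomial of degree at most `r`. -/
theorem eichler_integral_period_polynomial (r : ℕ)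
    (Γ : Subgroup (Matrix.SpecialLinearGroup (Fin 2) ℝ))
    (ψ : Γ → ℂ) (hψ : ∀ γ : Γ, ‖ψ γ‖ = 1)
    (f F : ℂ → ℂ)
    (hf : ∀ γ : Γ, ∀ z : ℂ, 0 < z.im →
      f (moebR γ.1 z) = ψ γ * (jfac γ.1 z) ^ (r + 2) * f z)
    (hfhol : DifferentiableOn ℂ f {z : ℂ | 0 < z.im})
    (hFhol : DifferentiableOn ℂ F {z : ℂ | 0 < z.im})
    (hFf : ∀ z : ℂ, 0 < z.im → iteratedDeriv (r + 1) F z = f z)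
    (γ : Γ) :
    ∃ p : Polynomial ℂ, p.degree ≤ r ∧ ∀ z : ℂ, 0 < z.im →
      (jfac γ.1 z) ^ r * (ψ γ)⁻¹ * F (moebR γ.1 z) - F z = p.eval z := by
  classical
  set g := γ.1 with hg
  have hF : AnalyticOnNhd ℂ F Eichler.UH :=
    DifferentiableOn.analyticOnNhd hFhol Eichler.UH_open
  have hψne : (ψ γ) ≠ 0 := by
    intro h
    have := hψ γ
    rw [h] at this
    simp at this
  set Φ : ℂ → ℂ := fun w => jfac g w ^ r * F (moebR g w) with hΦ
  have hΦan : AnalyticOnNhd ℂ Φ Eichler.UH := Eichler.an_jh hF r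
  set G : ℂ → ℂ := fun w => (ψ γ)⁻¹ * Φ w - F w with hG
  have hGzero : ∀ z ∈ Eichler.UH, iteratedDeriv (r + 1) G z = 0 := by
    intro z hz
    rw [hG]
    rw [Eichler.iter_lin ((ψ γ)⁻¹) hΦan hF (r + 1) z hz]
    rw [hΦ]
    rw [Eichler.bol r F hF z hz]
    have hm : moebR g z ∈ Eichler.UH := Eichler.moebR_mem g hz
    have hzim : 0 < z.im := hz
    rw [hFf z hzim, hFf _ hm, hf γ z hzim]
    have hne := Eichler.jfac_ne g hz
    field_simp
    simp [hg]
  have hGan : AnalyticOnNhd ℂ G Eichler.UH := by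
    apply DifferentiableOn.analyticOnNhd _ Eichler.UH_open
    intro z hz
    exact (((hΦan z hz).differentiableAt.const_mul _).sub
      (hF z hz).differentiableAt).differentiableWithinAt
  obtain ⟨p, hdeg, hp⟩ := Eichler.poly_of_iter_zero r G hGan hGzero
  refine ⟨p, hdeg, ?_⟩
  intro z hz
  have h := hp z hz
  rw [← h, hG, hΦ]
  ring
end
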